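/- Let p ∈ ℝ[x₁,…,xₙ] with homogeneous decomposition p = Σ_{i=0}^d p_i (each p_i homogeneous of degree i), suppose the real zero set of the top component satisfies Z_{ℝⁿ}(p_d) = {0} and that M := Z_{ℝⁿ}(p) is nonempty. Define q(x,a) := Σ_{i=0}^d (1−a²)^{d−i} p_i(x) and φ : ℝⁿ × ℝ → ℝⁿ × ℝ by φ(x,a) := ((1−a²)x, a). Then the real zero set of q in ℝ^{n+1} equals φ(M × ℝ): Z_{ℝ^{n+1}}(q) = φ(Z_{ℝⁿ}(p) × ℝ). -/

import Mathlib

/-!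
Write `c = 1 - a²`. Homogeneity of the components gives `q(c • x, a) = cᵈ p(x)`, so off the
hyperplanes `a = ±1` the map `φ` matches zeros of `p` with zeros of `q` bijectively. On
`a = ±1` only the top component survives, `q(y, a) = p_d(y)`, which vanishes only at `y = 0`,
and `0 = φ(x, ±1)` for any `x ∈ M`.
-/

open Set MvPolynomial

namespace MvPolynomial

variable {R σ : Type*} [CommSemiring R]

theorem IsHomogeneous.eval_smul {f : MvPolynomial σ R} {i : ℕ} (hf : f.IsHomogeneous i)
    (c : R) (x : σ → R) : eval (c • x) f = c ^ i * eval x f := by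
  rw [eval_eq, eval_eq, Finset.mul_sum]
  refine Finset.sum_congr rfl fun m hm => ?_
  have hdeg : ∑ j ∈ m.support, m j = i := by
    simpa [Finsupp.weight_apply, Finsupp.sum] using hf (mem_support_iff.mp hm)
  simp only [Pi.smul_apply, smul_eq_mul, mul_pow, Finset.prod_mul_distrib,
    Finset.prod_pow_eq_pow_sum, hdeg]
  ring

theorem sum_pow_sub_mul_eval_smul {pc : ℕ → MvPolynomial σ R} {d : ℕ}
    (hhom : ∀ i ∈ Finset.range (d + 1), (pc i).IsHomogeneous i) (c : R) (x : σ → R) :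
    ∑ i ∈ Finset.range (d + 1), c ^ (d - i) * eval (c • x) (pc i) =
      c ^ d * eval x (∑ i ∈ Finset.range (d + 1), pc i) := by
  rw [map_sum, Finset.mul_sum]
  refine Finset.sum_congr rfl fun i hi => ?_
  rw [(hhom i hi).eval_smul, ← mul_assoc, ← pow_add,
    Nat.sub_add_cancel (Nat.lt_succ_iff.mp (Finset.mem_range.mp hi))]

end MvPolynomial

theorem Finset.sum_range_succ_zero_pow_sub_mul {R : Type*} [Semiring R] (f : ℕ → R) (d : ℕ) :
    ∑ i ∈ Finset.range (d + 1), (0 : R) ^ (d - i) * f i = f d := by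
  rw [Finset.sum_range_succ, Finset.sum_eq_zero fun i hi => by
    rw [zero_pow (Nat.sub_ne_zero_of_lt (Finset.mem_range.mp hi)), zero_mul]]
  simp

/-- **Example 2.6(2), the image is algebraic.** Let `p ∈ ℝ[x₁,…,xₙ]` with homogeneous
decomposition `p = Σ_{i=0}^d pᵢ`, suppose that `p` is overt, i.e. the real zero set of the
top component satisfies `Z(p_d) = {0}`, and that `M := Z(p)` is nonempty. Let
`q(x,a) := Σ_{i=0}^d (1−a²)^{d−i} pᵢ(x)` and `φ(x,a) := ((1−a²)x, a)`. Then
`Z_{ℝ^{n+1}}(q) = φ(Z_{ℝⁿ}(p) × ℝ)`. -/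
theorem pinch_image_is_algebraic {n d : ℕ}
    (p : MvPolynomial (Fin n) ℝ) (pc : ℕ → MvPolynomial (Fin n) ℝ)
    (hsum : p = ∑ i ∈ Finset.range (d + 1), pc i)
    (hhom : ∀ i ∈ Finset.range (d + 1), (pc i).IsHomogeneous i)
    (hovert : {x : Fin n → ℝ | eval x (pc d) = 0} = {0})
    (hM : {x : Fin n → ℝ | eval x p = 0}.Nonempty) :
    {z : (Fin n → ℝ) × ℝ |
        ∑ i ∈ Finset.range (d + 1), (1 - z.2 ^ 2) ^ (d - i) * eval z.1 (pc i) = 0} =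
      (fun w : (Fin n → ℝ) × ℝ => ((1 - w.2 ^ 2) • w.1, w.2)) ''
        ({x : Fin n → ℝ | eval x p = 0} ×ˢ univ) := by
  have key := sum_pow_sub_mul_eval_smul hhom
  ext ⟨y, a⟩
  simp only [mem_ofPred_eq, mem_image, mem_prod, mem_univ, and_true, Prod.mk.injEq, Prod.exists]
  constructor
  · intro hq
    by_cases hc : (1 : ℝ) - a ^ 2 = 0
    · rw [hc, Finset.sum_range_succ_zero_pow_sub_mul] at hq
      have hy : y = 0 := by simpa using hovert.subset hq
      obtain ⟨x₀, hx₀⟩ := hM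
      exact ⟨x₀, a, hx₀, by simp [hc, hy], rfl⟩
    · refine ⟨(1 - a ^ 2)⁻¹ • y, a, ?_, smul_inv_smul₀ hc y, rfl⟩
      have hq' := key (1 - a ^ 2) ((1 - a ^ 2)⁻¹ • y)
      rw [smul_inv_smul₀ hc, hq, ← hsum] at hq'
      exact (mul_eq_zero.mp hq'.symm).resolve_left (pow_ne_zero d hc)
  · rintro ⟨x, b, hx, rfl, rfl⟩
    rw [key, ← hsum, hx, mul_zero]
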